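/- Let d ≥ 2, let T be a finite d-ary rooted tree of height n ≥ 0, and let G be an abelian subgroup of Aut(T). Let q be the order of the largest abelian subgroup of the symmetric group S_d, and let I(T/G) be the number of incomplete vertices of the quotient tree T/G. Then |G| ≤ q^{I(T/G)}. -/

import Mathlib

noncomputable section

/-- An infinite `d`-ary rooted tree, presented by its levels: `V n` is the set of
level-`n` vertices, `parent` maps a vertex to its parent, there is a unique root,
and every vertex has at least `1` and at most `d` children. -/
structure DaryTree (d : ℕ) where
  V : ℕ → Type
  parent : ∀ n, V (n + 1) → V n
  root_card : Nat.card (V 0) = 1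
  child_lb : ∀ n (v : V n), 1 ≤ Nat.card {w : V (n + 1) // parent n w = v}
  child_ub : ∀ n (v : V n), Nat.card {w : V (n + 1) // parent n w = v} ≤ d

/-- The group of automorphisms of a rooted tree presented by levels and parent maps:
families of level permutations fixing the root level structure and commuting with
the parent maps. -/
def autGroup {V : ℕ → Type*} (parent : ∀ n, V (n + 1) → V n) :
    Subgroup (∀ n, Equiv.Perm (V n)) where
  carrier := {σ | ∀ n (v : V (n + 1)), parent n (σ (n + 1) v) = σ n (parent n v)}
  one_mem' := by intro n v; rfl
  mul_mem' := by
    intro a b ha hb n v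
    simp only [Pi.mul_apply, Equiv.Perm.mul_apply]
    rw [ha, hb]
  inv_mem' := by
    intro a ha n v
    simp only [Pi.inv_apply]
    have h := ha n ((a (n + 1))⁻¹ v)
    rw [show (a (n + 1)) ((a (n + 1))⁻¹ v) = v from (a (n + 1)).apply_symm_apply v] at h
    rw [h, show (a n)⁻¹ ((a n) (parent n ((a (n + 1))⁻¹ v))) = parent n ((a (n + 1))⁻¹ v) from
      (a n).symm_apply_apply _]

/-- The automorphism group `Aut(T)` of an infinite `d`-ary rooted tree. -/
def DaryTree.aut {d : ℕ} (T : DaryTree d) : Subgroup (∀ n, Equiv.Perm (T.V n)) :=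
  autGroup T.parent

/-- A `d`-ary rooted tree is complete if every vertex has exactly `d` children. -/
def DaryTree.IsComplete {d : ℕ} (T : DaryTree d) : Prop :=
  ∀ n (v : T.V n), Nat.card {w : T.V (n + 1) // T.parent n w = v} = d

end
noncomputable section

/-- A finite `d`-ary rooted tree of height `n`, presented by its levels: there is a
unique root, each vertex of level `k < n` has at least `1` and at most `d` children,
and there are no vertices above level `n`. -/
structure FinDaryTree (d n : ℕ) where
  V : ℕ → Type
  parent : ∀ k, V (k + 1) → V k
  root_card : Nat.card (V 0) = 1
  child_lb : ∀ k, k < n → ∀ v : V k, 1 ≤ Nat.card {w : V (k + 1) // parent k w = v}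
  child_ub : ∀ k, k < n → ∀ v : V k, Nat.card {w : V (k + 1) // parent k w = v} ≤ d
  level_empty : ∀ k, n < k → IsEmpty (V k)

/-- The orbit equivalence relation of a group `G` of families of level permutations on
the level-`k` vertices. -/
def orbitSetoid {V : ℕ → Type*} (G : Subgroup (∀ k, Equiv.Perm (V k))) (k : ℕ) :
    Setoid (V k) where
  r v w := ∃ σ ∈ G, σ k v = w
  iseqv := by
    constructor
    · intro v
      exact ⟨1, G.one_mem, rfl⟩
    · rintro v w ⟨σ, hσ, hvw⟩
      refine ⟨σ⁻¹, G.inv_mem hσ, ?_⟩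
      rw [← hvw]
      simp
    · rintro u v w ⟨σ, hσ, h1⟩ ⟨τ, hτ, h2⟩
      refine ⟨τ * σ, G.mul_mem hτ hσ, ?_⟩
      simp [h1, h2]

/-- The parent map of the quotient tree `T/G`, sending the `G`-orbit of a level-`(k+1)`
vertex to the `G`-orbit of its parent.  The hypothesis `hG` says that elements of `G`
are tree automorphisms. -/
def orbitParent {V : ℕ → Type*} (parent : ∀ k, V (k + 1) → V k)
    (G : Subgroup (∀ k, Equiv.Perm (V k)))
    (hG : ∀ σ ∈ G, ∀ k (v : V (k + 1)), parent k (σ (k + 1) v) = σ k (parent k v))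
    (k : ℕ) : Quotient (orbitSetoid G (k + 1)) → Quotient (orbitSetoid G k) :=
  Quotient.map (parent k) (by
    rintro v w ⟨σ, hσ, hvw⟩
    refine ⟨σ, hσ, ?_⟩
    rw [← hG σ hσ k v, hvw])

/-- `I(T/G)`: the number of incomplete vertices of the quotient tree `T/G`, i.e. the
number of `G`-orbits of vertices of level `k < n` having fewer than `d` children in the
quotient tree. -/
def incompleteCount {V : ℕ → Type*} (d n : ℕ) (parent : ∀ k, V (k + 1) → V k)
    (G : Subgroup (∀ k, Equiv.Perm (V k)))
    (hG : ∀ σ ∈ G, ∀ k (v : V (k + 1)), parent k (σ (k + 1) v) = σ k (parent k v)) : ℕ :=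
  ∑ k ∈ Finset.range n,
    Nat.card {O : Quotient (orbitSetoid G k) //
      Nat.card {P : Quotient (orbitSetoid G (k + 1)) // orbitParent parent G hG k P = O} < d}

/-- `q`: the order of the largest abelian subgroup of the symmetric group `S_d`. -/
def abelianMax (d : ℕ) : ℕ :=
  sSup {m : ℕ | ∃ H : Subgroup (Equiv.Perm (Fin d)),
    (∀ a ∈ H, ∀ b ∈ H, a * b = b * a) ∧ Nat.card H = m}

end

/-!
Let `G_k ≤ G` fix every vertex of level `≤ k`, so `G_0 = G` and `G_n = 1`. An element of `G_k`
permutes the children of each level-`k` vertex; record this permutation at one representative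
of every `G`-orbit of level `k`. As `G` is abelian, an element acting trivially on the children
of all representatives acts trivially on the whole level `k + 1`, so `G_k / G_{k+1}` embeds into
the product of these actions. Each factor is an abelian group of permutations of at most `d`
points, of order at most `q`; and when the orbit is complete in `T/G`, the at most `d` children
of its representative lie in `d` distinct orbits, so the factor is trivial.
-/

open Equiv

lemma abelianMax_bddAbove (d : ℕ) : BddAbove {m : ℕ | ∃ H : Subgroup (Perm (Fin d)),
    (∀ a ∈ H, ∀ b ∈ H, a * b = b * a) ∧ Nat.card H = m} := by
  refine ⟨Nat.card (Perm (Fin d)), ?_⟩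
  rintro m ⟨H, -, rfl⟩
  exact Subgroup.card_le_card_group H

lemma card_le_abelianMax {α : Type*} [Finite α] {d : ℕ} (hα : Nat.card α ≤ d)
    (H : Subgroup (Perm α)) (hH : ∀ a ∈ H, ∀ b ∈ H, a * b = b * a) :
    Nat.card H ≤ abelianMax d := by
  let φ := Perm.viaEmbeddingHom ((Finite.equivFin α).toEmbedding.trans (Fin.castLEEmb hα))
  refine le_csSup (abelianMax_bddAbove d) ⟨H.map φ, ?_, ?_⟩
  · rintro _ ⟨a, ha, rfl⟩ _ ⟨b, hb, rfl⟩
    rw [← map_mul, ← map_mul, hH a ha b hb]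
  · exact Subgroup.card_map_of_injective (Perm.viaEmbeddingHom_injective _)

lemma card_range_pi_monoidHom_le {H ι : Type*} [Group H] [Fintype ι] {K : ι → Type*}
    [∀ i, Group (K i)] [∀ i, Finite (K i)] (f : ∀ i, H →* K i) :
    Nat.card (MonoidHom.pi f).range ≤ ∏ i, Nat.card (f i).range := by
  rw [← Nat.card_pi]
  refine Nat.card_le_card_of_injective
    (fun x i => ⟨x.1 i, ?_⟩) fun x y hxy => Subtype.ext (funext fun i => ?_)
  · obtain ⟨h, hh⟩ := x.2
    exact ⟨h, congrFun hh i⟩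
  · exact congrArg Subtype.val (congrFun hxy i)

lemma le_pow_sum_mul_of_le_pow_mul {a b : ℕ → ℕ} {q n : ℕ}
    (h : ∀ k < n, a k ≤ q ^ b k * a (k + 1)) :
    a 0 ≤ q ^ (∑ k ∈ Finset.range n, b k) * a n := by
  induction n with
  | zero => simp
  | succ n ih =>
    calc a 0 ≤ q ^ (∑ k ∈ Finset.range n, b k) * a n := ih fun k hk => h k (by omega)
      _ ≤ q ^ (∑ k ∈ Finset.range n, b k) * (q ^ b n * a (n + 1)) :=
        Nat.mul_le_mul_left _ (h n n.lt_succ_self)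
      _ = q ^ (∑ k ∈ Finset.range (n + 1), b k) * a (n + 1) := by
        rw [Finset.sum_range_succ, pow_add, mul_assoc]

section LevelStabilizer

variable {V : ℕ → Type*} {parent : ∀ k, V (k + 1) → V k} {G : Subgroup (∀ k, Perm (V k))}

def levelStabilizer (G : Subgroup (∀ k, Perm (V k))) (k : ℕ) : Subgroup (∀ j, Perm (V j)) :=
  G ⊓ ⨅ (j) (_ : j ≤ k), (Pi.evalMonoidHom (fun j => Perm (V j)) j).ker

lemma mem_levelStabilizer {k : ℕ} {σ : ∀ j, Perm (V j)} :
    σ ∈ levelStabilizer G k ↔ σ ∈ G ∧ ∀ j ≤ k, σ j = 1 := by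
  simp [levelStabilizer, Subgroup.mem_iInf]

lemma levelStabilizer_le (k : ℕ) : levelStabilizer G k ≤ G := inf_le_left

lemma levelStabilizer_succ_le (k : ℕ) : levelStabilizer G (k + 1) ≤ levelStabilizer G k :=
  inf_le_inf_left G (iInf_mono fun _ => iInf_mono' fun hj => ⟨hj.trans k.le_succ, le_rfl⟩)

lemma levelStabilizer_zero [Subsingleton (V 0)] : levelStabilizer G 0 = G := by
  refine le_antisymm inf_le_left fun σ hσ => mem_levelStabilizer.2 ⟨hσ, fun j hj => ?_⟩
  obtain rfl := Nat.le_zero.1 hj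
  exact Subsingleton.elim _ _

lemma levelStabilizer_eq_bot {k : ℕ} (hV : ∀ j, k < j → IsEmpty (V j)) :
    levelStabilizer G k = ⊥ := by
  refine (Subgroup.eq_bot_iff_forall _).2 fun σ hσ => funext fun j => ?_
  rcases le_or_gt j k with hj | hj
  · exact (mem_levelStabilizer.1 hσ).2 j hj
  · have := hV j hj
    exact Subsingleton.elim _ _

lemma parent_apply_of_mem_levelStabilizer (hG : G ≤ autGroup parent) {k : ℕ}
    {σ : ∀ j, Perm (V j)} (hσ : σ ∈ levelStabilizer G k) (w : V (k + 1)) :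
    parent k (σ (k + 1) w) = parent k w := by
  obtain ⟨hσG, hσk⟩ := mem_levelStabilizer.1 hσ
  rw [hG hσG k w, hσk k le_rfl, Perm.one_apply]

def childPermHom (hG : G ≤ autGroup parent) (k : ℕ) (v : V k) :
    levelStabilizer G k →* Perm {w : V (k + 1) // parent k w = v} where
  toFun σ := (σ.1 (k + 1)).subtypePerm fun w => by
    rw [parent_apply_of_mem_levelStabilizer hG σ.2]
  map_one' := rfl
  map_mul' _ _ := rfl

lemma apply_eq_one_of_fixes_children_out (hG : G ≤ autGroup parent) {k : ℕ}
    {σ : ∀ j, Perm (V j)} (hσ : ∀ g ∈ G, Commute σ g)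
    (hfix : ∀ (O : Quotient (orbitSetoid G k)) (w : V (k + 1)),
      parent k w = O.out → σ (k + 1) w = w) :
    σ (k + 1) = 1 := by
  ext w
  obtain ⟨g, hg, hgv⟩ := Quotient.mk_out (s := orbitSetoid G k) (parent k w)
  set u := (g (k + 1)).symm w
  have hgu : g (k + 1) u = w := (g (k + 1)).apply_symm_apply w
  have hu : parent k u = (Quotient.mk (orbitSetoid G k) (parent k w)).out :=
    (g k).injective (by rw [← hG hg k u, hgu, hgv])
  have hcomm : σ (k + 1) (g (k + 1) u) = g (k + 1) (σ (k + 1) u) :=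
    congrArg (fun τ => τ (k + 1) u) (hσ g hg).eq
  rw [Perm.one_apply, ← hgu, hcomm, hfix _ u hu]

lemma exists_child_mk_eq (hG : G ≤ autGroup parent) {k : ℕ} (v : V k)
    {P : Quotient (orbitSetoid G (k + 1))} (hP : orbitParent parent G hG k P = Quotient.mk _ v) :
    ∃ w, parent k w = v ∧ Quotient.mk _ w = P := by
  obtain ⟨w, rfl⟩ := Quotient.exists_rep P
  have hP' : Quotient.mk _ (parent k w) = Quotient.mk (orbitSetoid G k) v := hP
  obtain ⟨g, hg, hgv⟩ : ∃ g ∈ G, g k (parent k w) = v := Quotient.exact hP'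
  exact ⟨g (k + 1) w, by rw [hG hg k w, hgv],
    (Quotient.sound (s := orbitSetoid G (k + 1)) ⟨g, hg, rfl⟩).symm⟩

lemma eq_of_mk_eq_of_card_children_le (hG : G ≤ autGroup parent) {k : ℕ} {v : V k}
    [Finite {w // parent k w = v}]
    (hcard : Nat.card {w // parent k w = v} ≤
      Nat.card {P // orbitParent parent G hG k P = Quotient.mk _ v})
    {w w' : V (k + 1)} (hw : parent k w = v) (hw' : parent k w' = v)
    (h : Quotient.mk (orbitSetoid G (k + 1)) w = Quotient.mk _ w') : w = w' := by
  let s : {w // parent k w = v} → {P // orbitParent parent G hG k P = Quotient.mk _ v} :=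
    fun x => ⟨Quotient.mk _ x.1, congrArg (Quotient.mk _) x.2⟩
  have hs : Function.Surjective s := fun P =>
    let ⟨w, hw, hwP⟩ := exists_child_mk_eq hG v P.2
    ⟨⟨w, hw⟩, Subtype.ext hwP⟩
  have hbij := (Nat.bijective_iff_surjective_and_card s).2
    ⟨hs, le_antisymm hcard (Nat.card_le_card_of_surjective s hs)⟩
  exact congrArg Subtype.val (hbij.1 (a₁ := ⟨w, hw⟩) (a₂ := ⟨w', hw'⟩) (Subtype.ext h))

end LevelStabilizer

namespace FinDaryTree

variable {d n : ℕ} (T : FinDaryTree d n)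

lemma finite_children {k : ℕ} (hk : k < n) (v : T.V k) : Finite {w // T.parent k w = v} :=
  Nat.finite_of_card_ne_zero (Nat.one_le_iff_ne_zero.1 (T.child_lb k hk v))

instance finite_V (k : ℕ) : Finite (T.V k) := by
  induction k with
  | zero => exact Nat.finite_of_card_ne_zero (by rw [T.root_card]; exact one_ne_zero)
  | succ k ih =>
    by_cases hk : k < n
    · have := T.finite_children hk
      exact Finite.of_equiv _ (Equiv.sigmaFiberEquiv (T.parent k))
    · have := T.level_empty (k + 1) (by omega)
      infer_instance

lemma subsingleton_V_zero : Subsingleton (T.V 0) :=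
  (Nat.card_eq_one_iff_unique.1 T.root_card).1

variable {T} {G : Subgroup (∀ k, Perm (T.V k))} (hG : G ≤ autGroup T.parent)

lemma childPermHom_out_eq_one {k : ℕ} (hk : k < n) {O : Quotient (orbitSetoid G k)}
    (hO : d ≤ Nat.card {P // orbitParent T.parent G hG k P = O}) :
    childPermHom hG k O.out = 1 := by
  ext σ w
  have := T.finite_children hk O.out
  refine eq_of_mk_eq_of_card_children_le hG ?_
    ((parent_apply_of_mem_levelStabilizer hG σ.2 w).trans w.2) w.2 ?_
  · rw [Quotient.out_eq]
    exact (T.child_ub k hk O.out).trans hO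
  · exact (Quotient.sound (s := orbitSetoid G (k + 1))
      ⟨σ.1, levelStabilizer_le k σ.2, rfl⟩).symm

lemma card_range_childPermHom_le (hab : ∀ a ∈ G, ∀ b ∈ G, a * b = b * a) {k : ℕ}
    (hk : k < n) (v : T.V k) :
    Nat.card (childPermHom hG k v).range ≤ abelianMax d := by
  have := T.finite_children hk v
  refine card_le_abelianMax (T.child_ub k hk v) _ ?_
  rintro _ ⟨σ, rfl⟩ _ ⟨τ, rfl⟩
  have hστ : σ * τ = τ * σ :=
    Subtype.ext (hab σ.1 (levelStabilizer_le k σ.2) τ.1 (levelStabilizer_le k τ.2))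
  rw [← map_mul, ← map_mul, hστ]

lemma card_range_childPermHom_out_le (hab : ∀ a ∈ G, ∀ b ∈ G, a * b = b * a) {k : ℕ}
    (hk : k < n) (O : Quotient (orbitSetoid G k)) :
    Nat.card (childPermHom hG k O.out).range ≤
      if Nat.card {P // orbitParent T.parent G hG k P = O} < d then abelianMax d else 1 := by
  split_ifs with hO
  · exact card_range_childPermHom_le hG hab hk O.out
  · rw [childPermHom_out_eq_one hG hk (not_lt.1 hO), MonoidHom.range_one, Subgroup.card_bot]

lemma ker_pi_childPermHom (hab : ∀ a ∈ G, ∀ b ∈ G, a * b = b * a) (k : ℕ) :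
    (MonoidHom.pi fun O : Quotient (orbitSetoid G k) => childPermHom hG k O.out).ker =
      (levelStabilizer G (k + 1)).subgroupOf (levelStabilizer G k) := by
  ext σ
  obtain ⟨hσG, hσk⟩ := mem_levelStabilizer.1 σ.2
  rw [MonoidHom.mem_ker, Subgroup.mem_subgroupOf, mem_levelStabilizer]
  constructor
  · intro hσ
    refine ⟨hσG, fun j hj => ?_⟩
    rcases Nat.lt_or_eq_of_le hj with hj | rfl
    · exact hσk j (Nat.lt_succ_iff.1 hj)
    · refine apply_eq_one_of_fixes_children_out hG (fun g hg => hab _ hσG g hg) fun O w hw => ?_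
      exact congrArg Subtype.val (DFunLike.congr_fun (congrFun hσ O) ⟨w, hw⟩)
  · rintro ⟨-, hσ⟩
    funext O
    ext w
    exact DFunLike.congr_fun (hσ (k + 1) le_rfl) w.1

lemma card_levelStabilizer_le (hab : ∀ a ∈ G, ∀ b ∈ G, a * b = b * a) {k : ℕ}
    (hk : k < n) :
    Nat.card (levelStabilizer G k) ≤
      abelianMax d ^ Nat.card {O : Quotient (orbitSetoid G k) //
        Nat.card {P // orbitParent T.parent G hG k P = O} < d} *
      Nat.card (levelStabilizer G (k + 1)) := by
  classical
  have := T.finite_children hk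
  have := Fintype.ofFinite (Quotient (orbitSetoid G k))
  let Θ := MonoidHom.pi fun O : Quotient (orbitSetoid G k) => childPermHom hG k O.out
  have hrange : Nat.card Θ.range ≤ abelianMax d ^ Nat.card {O : Quotient (orbitSetoid G k) //
      Nat.card {P // orbitParent T.parent G hG k P = O} < d} :=
    calc Nat.card Θ.range ≤ ∏ O, Nat.card (childPermHom hG k O.out).range :=
          card_range_pi_monoidHom_le _
      _ ≤ ∏ O : Quotient (orbitSetoid G k),
            if Nat.card {P // orbitParent T.parent G hG k P = O} < d then abelianMax d else 1 :=
          Finset.prod_le_prod' fun O _ => card_range_childPermHom_out_le hG hab hk O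
      _ = _ := by
          rw [← Finset.prod_filter, Finset.prod_const, Nat.card_eq_fintype_card,
            Fintype.card_subtype]
  have hker : Nat.card Θ.ker = Nat.card (levelStabilizer G (k + 1)) := by
    rw [ker_pi_childPermHom hG hab k]
    exact Nat.card_congr (Subgroup.subgroupOfEquivOfLe (levelStabilizer_succ_le k)).toEquiv
  calc Nat.card (levelStabilizer G k) = Nat.card Θ.range * Nat.card Θ.ker := by
        rw [← Subgroup.index_ker, mul_comm, Subgroup.card_mul_index]
    _ ≤ _ := by rw [hker]; exact Nat.mul_le_mul_right _ hrange

end FinDaryTree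

theorem arboreal_abelian_card_bound_general {d n : ℕ} (T : FinDaryTree d n)
    (G : Subgroup (∀ k, Equiv.Perm (T.V k))) (hGsub : G ≤ autGroup T.parent)
    (hab : ∀ a ∈ G, ∀ b ∈ G, a * b = b * a) :
    Nat.card G ≤ abelianMax d ^ incompleteCount d n T.parent G (fun σ hσ => hGsub hσ) := by
  have := T.subsingleton_V_zero
  calc Nat.card G = Nat.card (levelStabilizer G 0) := by rw [levelStabilizer_zero]
    _ ≤ _ * Nat.card (levelStabilizer G n) :=
        le_pow_sum_mul_of_le_pow_mul (a := fun k => Nat.card (levelStabilizer G k))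
          fun k hk => FinDaryTree.card_levelStabilizer_le hGsub hab hk
    _ = _ := by rw [levelStabilizer_eq_bot T.level_empty, Subgroup.card_bot, mul_one]; rfl

/-- **Order bound for abelian groups of automorphisms of finite `d`-ary rooted trees**:
if `G ≤ Aut(T)` is abelian, `q` is the order of the largest abelian subgroup of `S_d`,
and `I(T/G)` is the number of incomplete vertices of the quotient tree `T/G`, then
`|G| ≤ q^{I(T/G)}`. -/
theorem arboreal_abelian_card_bound {d n : ℕ} (hd : 2 ≤ d) (T : FinDaryTree d n)
    (G : Subgroup (∀ k, Equiv.Perm (T.V k))) (hGsub : G ≤ autGroup T.parent)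
    (hab : ∀ a ∈ G, ∀ b ∈ G, a * b = b * a) :
    Nat.card G ≤ abelianMax d ^ incompleteCount d n T.parent G (fun σ hσ => hGsub hσ) :=
  arboreal_abelian_card_bound_general T G hGsub hab
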